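/- Let G be a locally compact abelian group with Haar measure μ, let S ⊆ G satisfy D̄(#|_S;μ) = ρ ∈ (0,∞), and let H ⊆ G be a compact set satisfying the packing condition (H − H) ∩ (S − S) = {0}. Then μ(H) ≤ 1/ρ. -/

import Mathlib

/-!
If `(H - H) ∩ (S - S) = {0}`, the translates `s + H` (`s ∈ S`) are pairwise disjoint, so for every
Borel `V` the `#(S ∩ V)` translates indexed by `S ∩ V` sit disjointly inside `H + V`, giving
`#(S ∩ V) · μ H ≤ μ (H + V)`. Taking `C = H` in the infimum defining the density therefore bounds
`ρ` by `(μ H)⁻¹`.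
-/

open MeasureTheory Set Pointwise Filter ENNReal

/-- The uniform asymptotic upper density of a measure `ν` with respect to `μ`:
`inf` over nonempty compact sets `C` of `sup` over Borel sets `V` with compact
closure of `ν V / μ (C + V)`, where `C + V` is a Minkowski sum. -/
noncomputable def uaud {G : Type*} [AddCommGroup G] [TopologicalSpace G] [MeasurableSpace G]
    (ν μ : Measure G) : ℝ≥0∞ :=
  ⨅ C ∈ {C : Set G | IsCompact C ∧ C.Nonempty},
    ⨆ V ∈ {V : Set G | MeasurableSet V ∧ IsCompact (closure V)},
      ν V / μ (C + V)

/-- The counting measure of the set `S`: the sum of Dirac measures at the points of `S`,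
so that `countOn S V = #(S ∩ V)` for measurable `V`. -/
noncomputable def countOn {G : Type*} [MeasurableSpace G] (S : Set G) : Measure G :=
  Measure.sum (fun s : S => Measure.dirac (s : G))

open Function

lemma ENNReal.div_le_inv_of_mul_le {a b c : ℝ≥0∞} (h : a * b ≤ c) : a / c ≤ b⁻¹ := by
  rw [ENNReal.le_inv_iff_mul_le, div_eq_mul_inv, mul_right_comm, ← div_eq_mul_inv]
  exact (ENNReal.div_le_div_right h c).trans ENNReal.div_self_le_one

lemma countOn_apply {G : Type*} [MeasurableSpace G] (S : Set G) {V : Set G}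
    (hV : MeasurableSet V) : countOn S V = (S ∩ V).encard := by
  rw [countOn, Measure.sum_apply _ hV]
  simp only [Measure.dirac_apply' _ hV]
  rw [tsum_subtype S, indicator_indicator, ← tsum_subtype, ← tsum_set_one]
  rfl

lemma pairwise_disjoint_vadd_of_sub_inter_sub_subset {G : Type*} [AddCommGroup G] {H T : Set G}
    (hpack : (H - H) ∩ (T - T) ⊆ {0}) :
    Pairwise (Disjoint on fun t : T => (t : G) +ᵥ H) := by
  rintro ⟨s, hs⟩ ⟨t, ht⟩ hst
  refine Set.disjoint_left.2 ?_
  rintro _ ⟨a, ha, rfl⟩ ⟨b, hb, hab⟩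
  have : s - t ∈ (H - H) ∩ (T - T) :=
    ⟨⟨b, hb, a, ha, by rw [sub_eq_sub_iff_add_eq_add, add_comm]; exact hab⟩, sub_mem_sub hs ht⟩
  exact hst (Subtype.ext (sub_eq_zero.1 (hpack this)))

lemma encard_mul_measure_le_measure_add {G : Type*} [AddCommGroup G] [MeasurableSpace G]
    [MeasurableAdd G] (μ : Measure G) [μ.IsAddLeftInvariant] {H T : Set G}
    (hH : MeasurableSet H) (hdisj : Pairwise (Disjoint on fun t : T => (t : G) +ᵥ H)) :
    T.encard * μ H ≤ μ (H + T) :=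
  calc T.encard * μ H = ∑' t : T, μ ((t : G) +ᵥ H) := by simp [measure_vadd]
    _ ≤ μ (⋃ t : T, (t : G) +ᵥ H) :=
      tsum_meas_le_meas_iUnion_of_disjoint μ (fun t => hH.const_vadd _) hdisj
    _ = μ (H + T) := by rw [iUnion_coe_set, iUnion_vadd_set, add_comm]; rfl

lemma countOn_mul_measure_le_measure_add {G : Type*} [AddCommGroup G] [MeasurableSpace G]
    [MeasurableAdd G] (μ : Measure G) [μ.IsAddLeftInvariant] {S H V : Set G}
    (hH : MeasurableSet H) (hpack : (H - H) ∩ (S - S) ⊆ {0}) (hV : MeasurableSet V) :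
    countOn S V * μ H ≤ μ (H + V) :=
  calc countOn S V * μ H = (S ∩ V).encard * μ H := by rw [countOn_apply S hV]
    _ ≤ μ (H + S ∩ V) := by
      refine encard_mul_measure_le_measure_add μ hH
        (pairwise_disjoint_vadd_of_sub_inter_sub_subset (subset_trans ?_ hpack))
      gcongr <;> exact inter_subset_left
    _ ≤ μ (H + V) := by gcongr; exact inter_subset_right

theorem packing_measure_bound_general {G : Type*} [AddCommGroup G]
    [TopologicalSpace G] [IsTopologicalAddGroup G] [T2Space G]
    [MeasurableSpace G] [BorelSpace G]
    (μ : Measure G) [μ.IsAddHaarMeasure] (S : Set G) (ρ : ℝ≥0∞)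
    (hρ : uaud (countOn S) μ = ρ)
    (H : Set G) (hH : IsCompact H)
    (hpack : (H - H) ∩ (S - S) = {0}) :
    μ H ≤ 1 / ρ := by
  rcases H.eq_empty_or_nonempty with rfl | hne
  · simp
  rw [one_div, ENNReal.le_inv_iff_le_inv, ← hρ, uaud]
  refine iInf₂_le_of_le H ⟨hH, hne⟩ (iSup₂_le fun V hV => ENNReal.div_le_inv_of_mul_le ?_)
  exact countOn_mul_measure_le_measure_add μ hH.isClosed.measurableSet hpack.subset hV.1

theorem packing_measure_bound {G : Type*} [AddCommGroup G]
    [TopologicalSpace G] [IsTopologicalAddGroup G] [LocallyCompactSpace G] [T2Space G]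
    [MeasurableSpace G] [BorelSpace G]
    (μ : Measure G) [μ.IsAddHaarMeasure] (S : Set G) (ρ : ℝ≥0∞)
    (hρ : uaud (countOn S) μ = ρ) (hρ0 : 0 < ρ) (hρfin : ρ < ⊤)
    (H : Set G) (hH : IsCompact H)
    (hpack : (H - H) ∩ (S - S) = {0}) :
    μ H ≤ 1 / ρ :=
  packing_measure_bound_general μ S ρ hρ H hH hpack
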